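/- Let h be the counterexample function of the second formulation (with parameter ε ∈ (0,1]), and define S(x) = ∫₀ˣ 4h(t²)/t dt. Then for 0 ≤ x < x₁ = (3/5)^{1/8}, S(x) = 6x⁴(1 − ε V(x/x₁)) where V(θ) = (7θ² − 3)(θ² − 1)³/3, and S(x) = 6x⁴ for x ≥ x₁. -/

import Mathlib

noncomputable def U (τ : ℝ) : ℝ := (7 * τ^2 - 8 * τ + 2) * τ^2

noncomputable def V (θ : ℝ) : ℝ := (7 * θ^2 - 3) * (θ^2 - 1)^3 / 3

noncomputable def x₀ : ℝ := (3/5 : ℝ) ^ ((1:ℝ)/4)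

noncomputable def x₁ : ℝ := (3/5 : ℝ) ^ ((1:ℝ)/8)

noncomputable def h (ε x : ℝ) : ℝ :=
  if x < x₀ then 6 * x^2 * (1 - ε * U ((x₀ - x) / x₀)) else 6 * x^2

noncomputable def S (ε x : ℝ) : ℝ := ∫ t in (0:ℝ)..x, 4 * h ε (t^2) / t


/-! On `[0, x₁]` the integrand is `24 t³ (1 - ε U (1 - (t / x₁)²))`, because `x₁² = x₀`, and
`x ↦ x⁴ V (x / x₁)` is an antiderivative of `4 x³ U (1 - (x / x₁)²)`. On `[x₁, ∞)` the integrand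
is `24 t³`, and the two pieces glue since `V 1 = 0`. -/

open Set intervalIntegral MeasureTheory

lemma x₁_pos : 0 < x₁ := Real.rpow_pos_of_pos (by norm_num) _

lemma x₁_sq : x₁ ^ 2 = x₀ := by
  rw [x₁, x₀, ← Real.rpow_natCast, ← Real.rpow_mul (by norm_num)]
  norm_num

lemma U_zero : U 0 = 0 := by simp [U]

lemma V_one : V 1 = 0 := by simp [V]

lemma continuous_U : Continuous U := by unfold U; fun_prop

lemma hasDerivAt_V (θ : ℝ) : HasDerivAt V (8 * θ * (θ ^ 2 - 1) ^ 2 * (7 * θ ^ 2 - 4) / 3) θ := by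
  have hsq : HasDerivAt (fun θ : ℝ => θ ^ 2) (2 * θ) θ := by simpa using hasDerivAt_pow 2 θ
  refine ((((hsq.const_mul 7).sub_const 3).fun_mul ((hsq.sub_const 1).fun_pow 3)).div_const 3
    ).congr_deriv ?_
  push_cast
  ring

lemma hasDerivAt_pow_four_mul_V {c : ℝ} (hc : c ≠ 0) (x : ℝ) :
    HasDerivAt (fun x => x ^ 4 * V (x / c)) (4 * x ^ 3 * U (1 - (x / c) ^ 2)) x := by
  refine ((hasDerivAt_pow 4 x).fun_mul
    ((hasDerivAt_V (x / c)).comp x ((hasDerivAt_id x).div_const c))).congr_deriv ?_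
  simp only [U, V, id, Function.comp_apply]
  field_simp
  ring

lemma h_of_le {ε x : ℝ} (hx : x ≤ x₀) : h ε x = 6 * x ^ 2 * (1 - ε * U ((x₀ - x) / x₀)) := by
  rcases hx.lt_or_eq with hx | rfl
  · exact if_pos hx
  · simp [h, U_zero]

lemma h_of_ge {ε x : ℝ} (hx : x₀ ≤ x) : h ε x = 6 * x ^ 2 := if_neg hx.not_gt

lemma integrand_of_le {ε t : ℝ} (ht0 : 0 ≤ t) (ht : t ≤ x₁) :
    4 * h ε (t ^ 2) / t = 24 * t ^ 3 * (1 - ε * U (1 - (t / x₁) ^ 2)) := by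
  rcases ht0.eq_or_lt with rfl | ht0
  · simp
  have hsq : t ^ 2 ≤ x₀ := x₁_sq ▸ pow_le_pow_left₀ ht0.le ht 2
  have harg : (x₀ - t ^ 2) / x₀ = 1 - (t / x₁) ^ 2 := by
    rw [← x₁_sq]
    field_simp [x₁_pos.ne']
  rw [h_of_le hsq, harg]
  field_simp
  ring

lemma integrand_of_ge {ε t : ℝ} (ht : x₁ ≤ t) : 4 * h ε (t ^ 2) / t = 24 * t ^ 3 := by
  have ht0 : 0 < t := x₁_pos.trans_le ht
  rw [h_of_ge (x₁_sq ▸ pow_le_pow_left₀ x₁_pos.le ht 2)]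
  field_simp
  ring

lemma eqOn_integrand_Icc (ε : ℝ) : EqOn (fun t => 4 * h ε (t ^ 2) / t)
    (fun t => 24 * t ^ 3 * (1 - ε * U (1 - (t / x₁) ^ 2))) (Icc 0 x₁) :=
  fun _ ht => integrand_of_le ht.1 ht.2

lemma continuous_mul_one_sub_U (ε : ℝ) :
    Continuous fun t => 24 * t ^ 3 * (1 - ε * U (1 - (t / x₁) ^ 2)) := by
  have := continuous_U
  fun_prop

lemma S_of_le {ε x : ℝ} (hx0 : 0 ≤ x) (hx : x ≤ x₁) :
    S ε x = 6 * x ^ 4 * (1 - ε * V (x / x₁)) := by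
  have hderiv (t : ℝ) : HasDerivAt (fun x => 6 * x ^ 4 - 6 * ε * (x ^ 4 * V (x / x₁)))
      (24 * t ^ 3 * (1 - ε * U (1 - (t / x₁) ^ 2))) t :=
    (((hasDerivAt_pow 4 t).const_mul 6).sub
      ((hasDerivAt_pow_four_mul_V x₁_pos.ne' t).const_mul (6 * ε))).congr_deriv (by push_cast; ring)
  rw [S, integral_congr ((eqOn_integrand_Icc ε).mono (uIcc_of_le hx0 ▸ Icc_subset_Icc_right hx)),
    integral_eq_sub_of_hasDerivAt (fun t _ => hderiv t)
      ((continuous_mul_one_sub_U ε).intervalIntegrable 0 x)]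
  ring

lemma S_of_ge {ε x : ℝ} (hx : x₁ ≤ x) : S ε x = 6 * x ^ 4 := by
  have hlow : IntervalIntegrable (fun t => 4 * h ε (t ^ 2) / t) volume 0 x₁ :=
    ((continuous_mul_one_sub_U ε).continuousOn.congr
      (uIcc_of_le x₁_pos.le ▸ eqOn_integrand_Icc ε)).intervalIntegrable
  have hhigh : EqOn (fun t => 4 * h ε (t ^ 2) / t) (fun t => 24 * t ^ 3) (uIcc x₁ x) :=
    fun _ ht => integrand_of_ge (uIcc_of_le hx ▸ ht).1
  rw [S, ← integral_add_adjacent_intervals hlow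
    ((continuous_const.mul (continuous_pow 3)).continuousOn.congr hhigh).intervalIntegrable,
    ← S, S_of_le x₁_pos.le le_rfl, integral_congr hhigh,
    div_self x₁_pos.ne', V_one, intervalIntegral.integral_const_mul, integral_pow]
  ring

theorem S_formula_general (ε : ℝ) :
    (∀ x : ℝ, 0 ≤ x → x < x₁ → S ε x = 6 * x^4 * (1 - ε * V (x / x₁))) ∧
    (∀ x : ℝ, x₁ ≤ x → S ε x = 6 * x^4) :=
  ⟨fun _ hx0 hx => S_of_le hx0 hx.le, fun _ hx => S_of_ge hx⟩

theorem S_formula (ε : ℝ) (hε0 : 0 < ε) (hε1 : ε ≤ 1) :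
    (∀ x : ℝ, 0 ≤ x → x < x₁ → S ε x = 6 * x^4 * (1 - ε * V (x / x₁))) ∧
    (∀ x : ℝ, x₁ ≤ x → S ε x = 6 * x^4) :=
  S_formula_general ε
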